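/- Let f ∈ ℂ[z₀,z₁,z₂,z₃] be an irreducible homogeneous polynomial and Y = V(f) ⊂ ℂℙ³ its zero locus. If Y contains two distinct twistor lines (i.e. there exist distinct 2-dimensional complex subspaces W₁ ≠ W₂ of ℂ⁴ with j̃(Wᵢ) = Wᵢ on which f vanishes identically), then Y is not a cone; here Y is called a cone if there exists a point p ∈ Y such that for every q ∈ Y with q ≠ p the projective line through p and q is contained in Y. -/

import Mathlib

/-- The conjugate-linear map `j̃ : ℂ⁴ → ℂ⁴`,
`j̃(z₀,z₁,z₂,z₃) = (−conj z₁, conj z₀, −conj z₃, conj z₂)`,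
inducing the fixed-point-free anti-holomorphic involution `j` on `ℂℙ³`. -/
noncomputable def jt (z : Fin 4 → ℂ) : Fin 4 → ℂ :=
  ![-(starRingEnd ℂ) (z 1), (starRingEnd ℂ) (z 0), -(starRingEnd ℂ) (z 3), (starRingEnd ℂ) (z 2)]

/-- The zero locus `Y = V(f) ⊆ ℂℙ³` is a cone if it has a vertex `[p] ∈ Y` such that for
every point `[q] ∈ Y` different from `[p]`, the projective line through `[p]` and `[q]`
(i.e. `ℙ(span_ℂ{p,q})`) is contained in `Y`. -/
def IsCone (f : MvPolynomial (Fin 4) ℂ) : Prop :=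
  ∃ p : Fin 4 → ℂ, p ≠ 0 ∧ MvPolynomial.eval p f = 0 ∧
    ∀ q : Fin 4 → ℂ, q ≠ 0 → MvPolynomial.eval q f = 0 → (¬∃ c : ℂ, q = c • p) →
      ∀ w ∈ Submodule.span ℂ {p, q}, MvPolynomial.eval w f = 0

/-!
A twistor line is spanned by any of its nonzero points `z` together with `jt z`, because `jt`
has no eigenvectors; so two distinct twistor lines meet only in `0` and together span `ℂ⁴`.
A cone vertex `p` misses one of them, `W`, and then `f` vanishes on the hyperplane
`span {p} ⊔ W = ker φ`. Vanishing on `ker φ` makes `f` divisible by the linear form `φ`, so by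
irreducibility every zero of `f` lies in `ker φ`; this includes both twistor lines, which is
absurd since they span `ℂ⁴`.
-/

open MvPolynomial

section LinearForm

variable {σ K : Type*} [Field K]

theorem dvd_sub_aeval_of_forall_dvd {R : Type*} [CommRing R] {a : MvPolynomial σ R}
    {g : σ → MvPolynomial σ R} (hg : ∀ j, a ∣ X j - g j) (p : MvPolynomial σ R) :
    a ∣ p - aeval g p := by
  have hcomp : (Ideal.Quotient.mkₐ R (Ideal.span {a})).comp (aeval g) =
      Ideal.Quotient.mkₐ R (Ideal.span {a}) := by
    refine algHom_ext fun j => ?_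
    simpa [Ideal.Quotient.mkₐ_eq_mk, Ideal.Quotient.eq, Ideal.mem_span_singleton] using
      (hg j).neg_right
  rw [← Ideal.mem_span_singleton, ← Ideal.Quotient.eq, ← Ideal.Quotient.mkₐ_eq_mk R,
    ← AlgHom.comp_apply, hcomp]

variable [Fintype σ] [DecidableEq σ]

noncomputable def linearPolynomial (φ : Module.Dual K (σ → K)) : MvPolynomial σ K :=
  ∑ j, C (φ (Pi.single j 1)) * X j

@[simp]
theorem eval_linearPolynomial (φ : Module.Dual K (σ → K)) (x : σ → K) :
    eval x (linearPolynomial φ) = φ x := by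
  conv_rhs => rw [← (Pi.basisFun K σ).sum_repr x]
  simp [linearPolynomial, mul_comm]

theorem linearPolynomial_dvd [Infinite K] {φ : Module.Dual K (σ → K)} (hφ : φ ≠ 0)
    {f : MvPolynomial σ K} (hf : ∀ x ∈ LinearMap.ker φ, eval x f = 0) :
    linearPolynomial φ ∣ f := by
  obtain ⟨v, hv⟩ := LinearMap.surjective hφ 1
  -- `x ↦ x - φ x • v` projects onto `ker φ`, so substituting it into `f` gives `0`, while the
  -- substitution changes `f` only by a multiple of `linearPolynomial φ`.
  set g : σ → MvPolynomial σ K := fun j => X j - C (v j) * linearPolynomial φ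
  have hproj : aeval g f = 0 := MvPolynomial.funext fun x => by
    rw [← aeval_eq_eval, comp_aeval_apply, map_zero]
    refine hf _ ?_
    convert (LinearMap.mem_ker (f := φ)).2 (show φ (x - φ x • v) = 0 by simp [hv]) using 2
    simp [g, mul_comm]
  have hdvd : ∀ j, linearPolynomial φ ∣ X j - g j := fun j => by
    simp only [g, sub_sub_cancel]
    exact dvd_mul_left _ _
  simpa only [hproj, sub_zero] using dvd_sub_aeval_of_forall_dvd hdvd f

theorem Irreducible.mem_ker_of_eval_eq_zero [Infinite K] {f : MvPolynomial σ K}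
    (hirr : Irreducible f) {φ : Module.Dual K (σ → K)} (hφ : φ ≠ 0)
    (hf : ∀ x ∈ LinearMap.ker φ, eval x f = 0) {x : σ → K} (hx : eval x f = 0) :
    x ∈ LinearMap.ker φ := by
  obtain ⟨h, rfl⟩ := linearPolynomial_dvd hφ hf
  have hL : ¬IsUnit (linearPolynomial φ) := fun hu =>
    (hu.map (eval 0)).ne_zero (by rw [eval_linearPolynomial, map_zero])
  have hh := ((hirr.isUnit_or_isUnit rfl).resolve_left hL).map (eval x)
  simpa [hh.ne_zero] using hx

end LinearForm

theorem Submodule.exists_dual_ker_eq {K V : Type*} [Field K] [AddCommGroup V] [Module K V]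
    [FiniteDimensional K V] {U : Submodule K V}
    (hU : Module.finrank K U + 1 = Module.finrank K V) :
    ∃ φ : Module.Dual K V, φ ≠ 0 ∧ LinearMap.ker φ = U := by
  have hlt : U < ⊤ := U.lt_top_of_finrank_lt_finrank (by omega)
  obtain ⟨φ, hφ, hU⟩ := exists_dual_map_eq_bot_of_lt_top hlt inferInstance
  refine ⟨φ, hφ, (eq_of_le_of_finrank_eq (LinearMap.le_ker_iff_map.2 hU) ?_).symm⟩
  have := Module.Dual.finrank_ker_add_one_of_ne_zero hφ
  omega

section Twistor

open ComplexConjugate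

theorem jt_jt (z : Fin 4 → ℂ) : jt (jt z) = -z := by
  ext i
  fin_cases i <;> simp [jt]

theorem jt_smul (c : ℂ) (z : Fin 4 → ℂ) : jt (c • z) = conj c • jt z := by
  ext i
  fin_cases i <;> simp [jt]

theorem smul_ne_jt {z : Fin 4 → ℂ} (hz : z ≠ 0) (c : ℂ) : c • z ≠ jt z := by
  intro hc
  -- `-z = jt (jt z) = |c|² • z`
  have h : ((1 + Complex.normSq c : ℝ) : ℂ) • z = 0 := by
    have h := jt_jt z
    rw [← hc, jt_smul, ← hc, smul_smul] at h
    rw [Complex.ofReal_add, Complex.ofReal_one, Complex.normSq_eq_conj_mul_self, add_smul,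
      one_smul, h, add_neg_cancel]
  exact hz ((smul_eq_zero.1 h).resolve_left (Complex.ofReal_ne_zero.2
    (add_pos_of_pos_of_nonneg one_pos (Complex.normSq_nonneg c)).ne'))

def IsTwistorLine (W : Submodule ℂ (Fin 4 → ℂ)) : Prop :=
  Module.finrank ℂ W = 2 ∧ ∀ w ∈ W, jt w ∈ W

theorem IsTwistorLine.span_pair_jt_eq {W : Submodule ℂ (Fin 4 → ℂ)} (hW : IsTwistorLine W)
    {z : Fin 4 → ℂ} (hzW : z ∈ W) (hz : z ≠ 0) : Submodule.span ℂ {z, jt z} = W := by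
  refine Submodule.eq_of_le_of_finrank_eq ?_ ?_
  · rw [Submodule.span_le, Set.insert_subset_iff, Set.singleton_subset_iff]
    exact ⟨hzW, hW.2 z hzW⟩
  · have := finrank_span_eq_card ((LinearIndependent.pair_iff' hz).2 (smul_ne_jt hz))
    rw [Matrix.range_cons_cons_empty] at this
    simpa [hW.1] using this

theorem IsTwistorLine.inf_eq_bot {W₁ W₂ : Submodule ℂ (Fin 4 → ℂ)} (h₁ : IsTwistorLine W₁)
    (h₂ : IsTwistorLine W₂) (hne : W₁ ≠ W₂) : W₁ ⊓ W₂ = ⊥ := by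
  refine (Submodule.eq_bot_iff _).2 fun z hz => by_contra fun hz0 => hne ?_
  rw [← h₁.span_pair_jt_eq hz.1 hz0, h₂.span_pair_jt_eq hz.2 hz0]

theorem IsTwistorLine.sup_eq_top {W₁ W₂ : Submodule ℂ (Fin 4 → ℂ)} (h₁ : IsTwistorLine W₁)
    (h₂ : IsTwistorLine W₂) (hne : W₁ ≠ W₂) : W₁ ⊔ W₂ = ⊤ := by
  refine Submodule.eq_top_of_finrank_eq ?_
  have := Submodule.finrank_sup_add_finrank_inf_eq W₁ W₂
  rw [h₁.inf_eq_bot h₂ hne, finrank_bot, h₁.1, h₂.1] at this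
  rw [Module.finrank_fin_fun]
  omega

end Twistor

theorem eval_eq_zero_of_mem_span_singleton_sup {f : MvPolynomial (Fin 4) ℂ} {p : Fin 4 → ℂ}
    (hcone : ∀ q : Fin 4 → ℂ, q ≠ 0 → eval q f = 0 → (¬∃ c : ℂ, q = c • p) →
      ∀ w ∈ Submodule.span ℂ {p, q}, eval w f = 0)
    {W : Submodule ℂ (Fin 4 → ℂ)} (hW : W ≠ ⊥) (hfW : ∀ w ∈ W, eval w f = 0) (hpW : p ∉ W) :
    ∀ w ∈ Submodule.span ℂ {p} ⊔ W, eval w f = 0 := by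
  intro w hw
  obtain ⟨y, hy, z, hzW, rfl⟩ := Submodule.mem_sup.1 hw
  obtain ⟨q, hqW, hq, hzq⟩ : ∃ q ∈ W, q ≠ 0 ∧ z ∈ Submodule.span ℂ {q} := by
    by_cases hz : z = 0
    · obtain ⟨q, hqW, hq⟩ := Submodule.exists_mem_ne_zero_of_ne_bot hW
      exact ⟨q, hqW, hq, hz ▸ zero_mem _⟩
    · exact ⟨z, hzW, hz, Submodule.mem_span_singleton_self z⟩
  have hqp : ¬∃ c : ℂ, q = c • p := by
    rintro ⟨c, rfl⟩
    have hc : c ≠ 0 := by rintro rfl; simp at hq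
    exact hpW (by simpa [smul_smul, hc] using W.smul_mem c⁻¹ hqW)
  refine hcone q hq (hfW q hqW) hqp _ ?_
  rw [Submodule.span_insert]
  exact Submodule.add_mem_sup hy hzq

theorem stmt13_general (f : MvPolynomial (Fin 4) ℂ)
    (hirr : Irreducible f)
    (W₁ W₂ : Submodule ℂ (Fin 4 → ℂ)) (hne : W₁ ≠ W₂)
    (h1 : Module.finrank ℂ W₁ = 2)
    (hj1 : jt '' (W₁ : Set (Fin 4 → ℂ)) = (W₁ : Set (Fin 4 → ℂ)))
    (hv1 : ∀ w ∈ W₁, MvPolynomial.eval w f = 0)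
    (h2 : Module.finrank ℂ W₂ = 2)
    (hj2 : jt '' (W₂ : Set (Fin 4 → ℂ)) = (W₂ : Set (Fin 4 → ℂ)))
    (hv2 : ∀ w ∈ W₂, MvPolynomial.eval w f = 0) :
    ¬IsCone f := by
  rintro ⟨p, hp, -, hcone⟩
  have ht₁ : IsTwistorLine W₁ := ⟨h1, fun w hw => hj1.subset (Set.mem_image_of_mem jt hw)⟩
  have ht₂ : IsTwistorLine W₂ := ⟨h2, fun w hw => hj2.subset (Set.mem_image_of_mem jt hw)⟩
  obtain ⟨W, hW, hfW, hpW⟩ :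
      ∃ W : Submodule ℂ (Fin 4 → ℂ), IsTwistorLine W ∧ (∀ w ∈ W, eval w f = 0) ∧ p ∉ W := by
    by_cases hp₁ : p ∈ W₁
    · refine ⟨W₂, ht₂, hv2, fun hp₂ => hp ?_⟩
      simpa [ht₁.inf_eq_bot ht₂ hne] using Submodule.mem_inf.2 ⟨hp₁, hp₂⟩
    · exact ⟨W₁, ht₁, hv1, hp₁⟩
  obtain ⟨φ, hφ, hker⟩ := Submodule.exists_dual_ker_eq (U := Submodule.span ℂ {p} ⊔ W) (by
    rw [sup_comm, Submodule.finrank_sup_span_singleton hpW, hW.1, Module.finrank_fin_fun])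
  have hW₀ : W ≠ ⊥ := Submodule.one_le_finrank_iff.1 (by simp [hW.1])
  have hfφ : ∀ x ∈ LinearMap.ker φ, eval x f = 0 :=
    hker ▸ eval_eq_zero_of_mem_span_singleton_sup hcone hW₀ hfW hpW
  have hle : W₁ ⊔ W₂ ≤ LinearMap.ker φ := sup_le
    (fun w hw => hirr.mem_ker_of_eval_eq_zero hφ hfφ (hv1 w hw))
    (fun w hw => hirr.mem_ker_of_eval_eq_zero hφ hfφ (hv2 w hw))
  rw [ht₁.sup_eq_top ht₂ hne, top_le_iff, LinearMap.ker_eq_top] at hle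
  exact hφ hle

/-- If the zero locus `Y = V(f)` of an irreducible homogeneous polynomial `f` contains two
distinct twistor lines, then `Y` is not a cone. -/
theorem stmt13 (d : ℕ) (f : MvPolynomial (Fin 4) ℂ)
    (hirr : Irreducible f) (hhom : f.IsHomogeneous d)
    (W₁ W₂ : Submodule ℂ (Fin 4 → ℂ)) (hne : W₁ ≠ W₂)
    (h1 : Module.finrank ℂ W₁ = 2)
    (hj1 : jt '' (W₁ : Set (Fin 4 → ℂ)) = (W₁ : Set (Fin 4 → ℂ)))
    (hv1 : ∀ w ∈ W₁, MvPolynomial.eval w f = 0)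
    (h2 : Module.finrank ℂ W₂ = 2)
    (hj2 : jt '' (W₂ : Set (Fin 4 → ℂ)) = (W₂ : Set (Fin 4 → ℂ)))
    (hv2 : ∀ w ∈ W₂, MvPolynomial.eval w f = 0) :
    ¬IsCone f :=
  stmt13_general f hirr W₁ W₂ hne h1 hj1 hv1 h2 hj2 hv2
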